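/- Assume P : ℝ^d × ℝ^d → ℝ is continuous, symmetric (P(v,w) = P(w,v) for all v,w), and bounded below, P(v,w) ≥ −a for all v,w with a ≥ 0. Let k_d, k_o solve the scaled Riccati system and assume k_d(t) − k_o(t)/N ≥ 0 for all t ∈ [0,T]. Let differentiable functions v_1,…,v_N, w_1,…,w_N : [0,T] → ℝ^d solve the open-loop coupled system with w_i(0) = v_i(0) for all i, and suppose the empirical variance σ_v²(t) = (1/N) Σ_{j=1}^N |v_j(t) − m_v(t)|², with m_v(t) = (1/N) Σ_{j=1}^N v_j(t), is strictly positive on [0,T]. Set κ(t) = k_d(t) − k_o(t)/N and β_N(t) = exp(−p̄ t − (1/ν) ∫₀ᵗ κ(s) ds). Then for all t ∈ [0,T]: σ_v²(t) ≤ σ_v²(0) e^{2at} (1 + (1/ν) ∫₀ᵗ e^{−as} κ(s) β_N(s) ds)². -/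

import Mathlib

/-!
The control enters through the linear system `w`: its deviations from the mean solve the scalar
ODE `z' = -(p̄ + κ/ν) z`, so they equal `β_N(t)` times their initial values, which are those of `v`.
In the derivative of `σ_v²` the control term proportional to `∑ w_j` drops out because deviations
from the mean sum to zero, the remaining one is bounded by Cauchy–Schwarz by
`(2/ν) κ β_N σ_v(t) σ_v(0)`, and symmetrizing the interaction term and using `P ≥ -a` bounds it by
`2a σ_v²`. Thus `σ_v = √σ_v²` satisfies `σ_v' ≤ a σ_v + (1/ν) κ β_N σ_v(0)`, and integrating
`(e^{-at} σ_v)'` gives the bound.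
-/

open Set MeasureTheory
open scoped RealInnerProductSpace

section Calculus

variable {E : Type*} [NormedAddCommGroup E] [NormedSpace ℝ E]

theorem ContinuousOn.hasDerivWithinAt_intervalIntegral_Ici [CompleteSpace E] {f : ℝ → E} {a b x : ℝ}
    (hf : ContinuousOn f (Icc a b)) (hx : x ∈ Ico a b) :
    HasDerivWithinAt (fun t => ∫ s in a..t, f s) (f x) (Ici x) x :=
  intervalIntegral.integral_hasDerivWithinAt_right
    ((hf.mono (Icc_subset_Icc_right hx.2.le)).intervalIntegrable_of_Icc hx.1)
    ⟨Ioo a b, Ioo_mem_nhdsGT_of_mem hx,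
      (hf.mono Ioo_subset_Icc_self).aestronglyMeasurable measurableSet_Ioo⟩
    ((hf x (Ico_subset_Icc_self hx)).mono_of_mem_nhdsWithin (Icc_mem_nhdsGT_of_mem hx))

theorem ContinuousOn.continuousOn_intervalIntegral [CompleteSpace E] {f : ℝ → E} {a b : ℝ}
    (hf : ContinuousOn f (Icc a b)) :
    ContinuousOn (fun t => ∫ s in a..t, f s) (Icc a b) := by
  rcases lt_or_ge b a with hba | hab
  · simp only [Icc_eq_empty_of_lt hba, continuousOn_empty]
  · have h := intervalIntegral.continuousOn_primitive_interval (a := a) (b := b) (μ := volume)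
      (by simpa only [uIcc_of_le hab] using hf.integrableOn_Icc)
    rwa [uIcc_of_le hab] at h

theorem eq_exp_sub_smul_of_hasDerivWithinAt {y : ℝ → E} {C c : ℝ → ℝ} {a b : ℝ}
    (hC : ContinuousOn C (Icc a b)) (hC' : ∀ x ∈ Ico a b, HasDerivWithinAt C (c x) (Ici x) x)
    (hy : ContinuousOn y (Icc a b))
    (hy' : ∀ x ∈ Ico a b, HasDerivWithinAt y (-c x • y x) (Ici x) x) :
    ∀ t ∈ Icc a b, y t = Real.exp (C a - C t) • y a := by
  have hconst := constant_of_has_deriv_right_zero (hC.rexp.smul hy) fun x hx => by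
    simpa [smul_smul, ← add_smul, mul_comm] using ((hC' x hx).exp).smul (hy' x hx)
  intro t ht
  have h := hconst t ht
  simp only [Pi.smul_apply'] at h
  rw [Real.exp_sub, div_eq_inv_mul, mul_smul, ← h, inv_smul_smul₀ (Real.exp_ne_zero _)]

end Calculus

theorem exp_neg_mul_mul_sqrt_le_of_hasDerivAt_le {f f' g : ℝ → ℝ} {a c T : ℝ} (hT : 0 ≤ T)
    (hf : ContinuousOn f (Icc 0 T)) (hf_pos : ∀ x ∈ Ioo 0 T, 0 < f x)
    (hf' : ∀ x ∈ Ioo 0 T, HasDerivAt f (f' x) x)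
    (hle : ∀ x ∈ Ioo 0 T, f' x ≤ 2 * a * f x + 2 * c * g x * (√(f x) * √(f 0)))
    (hg : IntegrableOn g (Icc 0 T)) :
    Real.exp (-a * T) * √(f T) ≤ √(f 0) * (1 + c * ∫ s in (0)..T, Real.exp (-a * s) * g s) := by
  have hexp : Continuous fun r : ℝ => Real.exp (-a * r) := by fun_prop
  have hderiv : ∀ x ∈ Ioo 0 T, HasDerivAt (fun r => Real.exp (-a * r) * √(f r))
      (Real.exp (-a * x) * (-a) * √(f x) + Real.exp (-a * x) * (f' x / (2 * √(f x)))) x := by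
    intro x hx
    have hlin : HasDerivAt (fun r => -a * r) (-a) x := by
      simpa using (hasDerivAt_id x).const_mul (-a)
    exact hlin.exp.mul ((hf' x hx).sqrt (hf_pos x hx).ne')
  have hderiv_le : ∀ x ∈ Ioo 0 T, Real.exp (-a * x) * (-a) * √(f x)
      + Real.exp (-a * x) * (f' x / (2 * √(f x))) ≤ c * √(f 0) * (Real.exp (-a * x) * g x) := by
    intro x hx
    have hfx := hf_pos x hx
    have hroot := Real.sqrt_pos.2 hfx
    have hhalf : f' x / (2 * √(f x)) ≤ a * √(f x) + c * g x * √(f 0) := by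
      rw [div_le_iff₀ (by positivity)]
      calc f' x ≤ 2 * a * f x + 2 * c * g x * (√(f x) * √(f 0)) := hle x hx
        _ = _ := by linear_combination (-2 * a) * Real.mul_self_sqrt hfx.le
    nlinarith [mul_le_mul_of_nonneg_left hhalf (Real.exp_pos (-a * x)).le]
  have h := intervalIntegral.sub_le_integral_of_hasDeriv_right_of_le
    (g := fun r => Real.exp (-a * r) * √(f r))
    (φ := fun x => c * √(f 0) * (Real.exp (-a * x) * g x)) hT
    (hexp.continuousOn.mul hf.sqrt) (fun x hx => (hderiv x hx).hasDerivWithinAt)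
    ((hg.continuousOn_mul hexp.continuousOn isCompact_Icc).const_mul _) hderiv_le
  rw [intervalIntegral.integral_const_mul, mul_zero, Real.exp_zero, one_mul] at h
  linarith

theorem le_mul_exp_mul_sq_of_hasDerivAt_le {f f' g : ℝ → ℝ} {a c T : ℝ}
    (hf : ContinuousOn f (Icc 0 T)) (hf_pos : ∀ x ∈ Icc 0 T, 0 < f x)
    (hf' : ∀ x ∈ Ioo 0 T, HasDerivAt f (f' x) x)
    (hle : ∀ x ∈ Ioo 0 T, f' x ≤ 2 * a * f x + 2 * c * g x * (√(f x) * √(f 0)))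
    (hg : IntegrableOn g (Icc 0 T)) :
    ∀ t ∈ Icc 0 T,
      f t ≤ f 0 * Real.exp (2 * a * t) * (1 + c * ∫ s in (0)..t, Real.exp (-a * s) * g s) ^ 2 := by
  intro t ht
  have hIcc : Icc 0 t ⊆ Icc 0 T := Icc_subset_Icc_right ht.2
  have hIoo : Ioo 0 t ⊆ Ioo 0 T := Ioo_subset_Ioo_right ht.2
  have hroot := exp_neg_mul_mul_sqrt_le_of_hasDerivAt_le ht.1 (hf.mono hIcc)
    (fun x hx => hf_pos x (Ioo_subset_Icc_self (hIoo hx))) (fun x hx => hf' x (hIoo hx))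
    (fun x hx => hle x (hIoo hx)) (hg.mono_set hIcc)
  set I := ∫ s in (0)..t, Real.exp (-a * s) * g s
  have hsq : Real.exp (-a * t) ^ 2 * f t ≤ f 0 * (1 + c * I) ^ 2 := by
    have h := pow_le_pow_left₀ (by positivity) hroot 2
    rwa [mul_pow, mul_pow, Real.sq_sqrt (hf_pos t ht).le,
      Real.sq_sqrt (hf_pos 0 ⟨le_rfl, ht.1.trans ht.2⟩).le] at h
  have hexp : Real.exp (2 * a * t) * Real.exp (-a * t) ^ 2 = 1 := by
    rw [sq, ← Real.exp_add, ← Real.exp_add, ← Real.exp_zero]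
    ring_nf
  calc f t = Real.exp (2 * a * t) * (Real.exp (-a * t) ^ 2 * f t) := by
        rw [← mul_assoc, hexp, one_mul]
    _ ≤ Real.exp (2 * a * t) * (f 0 * (1 + c * I) ^ 2) := by gcongr
    _ = _ := by ring

section EmpiricalMoments

variable {E : Type*} [NormedAddCommGroup E] [InnerProductSpace ℝ E] {N : ℕ}

noncomputable def empiricalMean (x : Fin N → E) : E := (N : ℝ)⁻¹ • ∑ j, x j

noncomputable def empiricalVariance (x : Fin N → E) : ℝ :=
  (N : ℝ)⁻¹ * ∑ j, ‖x j - empiricalMean x‖ ^ 2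

theorem sum_sub_empiricalMean (hN : N ≠ 0) (x : Fin N → E) :
    ∑ j, (x j - empiricalMean x) = 0 := by
  rw [Finset.sum_sub_distrib, Finset.sum_const, Finset.card_univ, Fintype.card_fin,
    empiricalMean, ← Nat.cast_smul_eq_nsmul ℝ, smul_inv_smul₀ (Nat.cast_ne_zero.2 hN), sub_self]

theorem sub_empiricalMean_eq_smul_sum (hN : N ≠ 0) (x : Fin N → E) (i : Fin N) :
    x i - empiricalMean x = (N : ℝ)⁻¹ • ∑ j, (x i - x j) := by
  rw [Finset.sum_sub_distrib, Finset.sum_const, Finset.card_univ, Fintype.card_fin,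
    ← Nat.cast_smul_eq_nsmul ℝ, smul_sub, inv_smul_smul₀ (Nat.cast_ne_zero.2 hN), empiricalMean]

theorem inv_smul_sum_smul_sub (hN : N ≠ 0) (p : ℝ) (x : Fin N → E) (i : Fin N) :
    (N : ℝ)⁻¹ • ∑ j, p • (x j - x i) = p • (empiricalMean x - x i) := by
  rw [← Finset.smul_sum, smul_comm, Finset.sum_sub_distrib, Finset.sum_const, Finset.card_univ,
    Fintype.card_fin, ← Nat.cast_smul_eq_nsmul ℝ, smul_sub, inv_smul_smul₀ (Nat.cast_ne_zero.2 hN),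
    empiricalMean]

theorem sum_inner_sub_empiricalMean_const (hN : N ≠ 0) (x : Fin N → E) (y : E) :
    ∑ j, ⟪x j - empiricalMean x, y⟫ = 0 := by
  rw [← sum_inner, sum_sub_empiricalMean hN, inner_zero_left]

theorem sum_inner_sub_empiricalMean_sub_empiricalMean (hN : N ≠ 0) (x y : Fin N → E) :
    ∑ j, ⟪x j - empiricalMean x, y j - empiricalMean y⟫ =
      ∑ j, ⟪x j - empiricalMean x, y j⟫ := by
  simp only [inner_sub_right, Finset.sum_sub_distrib, sum_inner_sub_empiricalMean_const hN,
    sub_zero]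

theorem sum_sum_norm_sub_sq (hN : N ≠ 0) (x : Fin N → E) :
    ∑ j, ∑ k, ‖x j - x k‖ ^ 2 = 2 * N * ∑ j, ‖x j - empiricalMean x‖ ^ 2 := by
  set u := fun j => x j - empiricalMean x
  have hu : ∀ j k, x j - x k = u j - u k := fun j k => by simp only [u]; abel
  have hcross : ∀ j, ∑ k, ⟪u j, u k⟫ = 0 := fun j => by
    rw [← inner_sum, sum_sub_empiricalMean hN, inner_zero_right]
  calc ∑ j, ∑ k, ‖x j - x k‖ ^ 2 = ∑ j, ∑ k, (‖u j‖ ^ 2 - 2 * ⟪u j, u k⟫ + ‖u k‖ ^ 2) := by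
        simp only [hu, norm_sub_sq_real]
    _ = 2 * N * ∑ j, ‖u j‖ ^ 2 := by
        simp only [Finset.sum_add_distrib, Finset.sum_sub_distrib, ← Finset.mul_sum, hcross,
          Finset.sum_const, Finset.card_univ, Fintype.card_fin, nsmul_eq_mul]
        ring

theorem two_mul_sum_sum_mul_inner_sub (x : Fin N → E) {Q : Fin N → Fin N → ℝ}
    (hQ_symm : ∀ j k, Q j k = Q k j) (m : E) :
    2 * ∑ j, ∑ k, Q j k * ⟪x j - m, x k - x j⟫ = -∑ j, ∑ k, Q j k * ‖x j - x k‖ ^ 2 := by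
  have hswap : ∑ j, ∑ k, Q j k * ⟪x j - m, x k - x j⟫
      = ∑ j, ∑ k, Q j k * ⟪x k - m, x j - x k⟫ := by
    rw [Finset.sum_comm]
    simp only [hQ_symm]
  have hpair : ∀ j k, ⟪x j - m, x k - x j⟫ + ⟪x k - m, x j - x k⟫ = -‖x j - x k‖ ^ 2 := by
    intro j k
    rw [← neg_sub (x j) (x k), inner_neg_right, neg_add_eq_sub, ← inner_sub_left,
      sub_sub_sub_cancel_right, ← neg_sub (x j) (x k), inner_neg_left, real_inner_self_eq_norm_sq]
  rw [two_mul]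
  nth_rewrite 2 [hswap]
  simp only [← Finset.sum_add_distrib, ← mul_add, hpair, mul_neg, Finset.sum_neg_distrib]

theorem sum_sum_mul_inner_sub_le (hN : N ≠ 0) (x : Fin N → E) {Q : Fin N → Fin N → ℝ} {a : ℝ}
    (hQ_symm : ∀ j k, Q j k = Q k j) (hQ_ge : ∀ j k, -a ≤ Q j k) :
    ∑ j, ∑ k, Q j k * ⟪x j - empiricalMean x, x k - x j⟫
      ≤ a * N * ∑ j, ‖x j - empiricalMean x‖ ^ 2 := by
  have hsym := two_mul_sum_sum_mul_inner_sub x hQ_symm (empiricalMean x)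
  have hbound : -∑ j, ∑ k, Q j k * ‖x j - x k‖ ^ 2 ≤ a * ∑ j, ∑ k, ‖x j - x k‖ ^ 2 := by
    simp only [Finset.mul_sum, ← Finset.sum_neg_distrib]
    gcongr with j _ k _
    nlinarith [hQ_ge j k, sq_nonneg ‖x j - x k‖]
  rw [sum_sum_norm_sub_sq hN] at hbound
  linarith

theorem abs_inv_mul_sum_inner_le (x y : Fin N → E) :
    |(N : ℝ)⁻¹ * ∑ j, ⟪x j - empiricalMean x, y j - empiricalMean y⟫|
      ≤ √(empiricalVariance x) * √(empiricalVariance y) := by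
  have hCS : |∑ j, ⟪x j - empiricalMean x, y j - empiricalMean y⟫|
      ≤ √(∑ j, ‖x j - empiricalMean x‖ ^ 2) * √(∑ j, ‖y j - empiricalMean y‖ ^ 2) :=
    calc _ ≤ ∑ j, ‖x j - empiricalMean x‖ * ‖y j - empiricalMean y‖ :=
          (Finset.abs_sum_le_sum_abs _ _).trans (by gcongr; exact abs_real_inner_le_norm _ _)
      _ ≤ _ := Real.sum_mul_le_sqrt_mul_sqrt _ _ _
  have hN : √((N : ℝ)⁻¹) * √((N : ℝ)⁻¹) = (N : ℝ)⁻¹ := Real.mul_self_sqrt (by positivity)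
  rw [abs_mul, abs_of_nonneg (by positivity), empiricalVariance, empiricalVariance,
    Real.sqrt_mul (by positivity), Real.sqrt_mul (by positivity)]
  calc (N : ℝ)⁻¹ * |_| ≤ (N : ℝ)⁻¹ * (√(∑ j, ‖x j - empiricalMean x‖ ^ 2)
        * √(∑ j, ‖y j - empiricalMean y‖ ^ 2)) := by gcongr
    _ = _ := by nth_rewrite 1 [← hN]; ring

theorem hasDerivAt_empiricalVariance (hN : N ≠ 0) {x : Fin N → ℝ → E} {x' : Fin N → E} {s : ℝ}
    (hx : ∀ j, HasDerivAt (x j) (x' j) s) :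
    HasDerivAt (fun t => empiricalVariance fun j => x j t)
      (2 * ((N : ℝ)⁻¹ * ∑ j, ⟪x j s - empiricalMean (fun k => x k s), x' j⟫)) s := by
  have hmean : HasDerivAt (fun t => empiricalMean fun j => x j t) (empiricalMean x') s :=
    (HasDerivAt.fun_sum fun j _ => hx j).const_smul _
  have hdev : ∀ j, HasDerivAt (fun t => ‖x j t - empiricalMean (fun k => x k t)‖ ^ 2)
      (2 * ⟪x j s - empiricalMean (fun k => x k s), x' j - empiricalMean x'⟫) s :=
    fun j => ((hx j).sub hmean).norm_sq
  refine ((HasDerivAt.fun_sum (u := Finset.univ) fun j _ => hdev j).const_mul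
    (N : ℝ)⁻¹).congr_deriv ?_
  rw [← Finset.mul_sum, sum_inner_sub_empiricalMean_sub_empiricalMean hN]
  ring

theorem inv_mul_sum_inner_drift_le (hN : N ≠ 0) {ν a κ b c : ℝ} (hν : 0 < ν) (hκ : 0 ≤ κ)
    (hb : 0 ≤ b) {Q : Fin N → Fin N → ℝ} (hQ_symm : ∀ j k, Q j k = Q k j)
    (hQ_ge : ∀ j k, -a ≤ Q j k)
    {x x₀ z : Fin N → E} (hz : ∀ j, z j - empiricalMean z = b • (x₀ j - empiricalMean x₀)) :
    (N : ℝ)⁻¹ * ∑ j, ⟪x j - empiricalMean x,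
        (N : ℝ)⁻¹ • ∑ k, Q j k • (x k - x j) + (-(1 / ν)) • (κ • z j + c • ∑ k, z k)⟫
      ≤ a * empiricalVariance x
        + 1 / ν * (κ * b) * (√(empiricalVariance x) * √(empiricalVariance x₀)) := by
  have hinteraction : (N : ℝ)⁻¹ * ∑ j, ⟪x j - empiricalMean x, (N : ℝ)⁻¹ • ∑ k, Q j k • (x k - x j)⟫
      ≤ a * empiricalVariance x := by
    have h := sum_sum_mul_inner_sub_le hN x hQ_symm hQ_ge
    have hN' : (N : ℝ) ≠ 0 := Nat.cast_ne_zero.2 hN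
    simp only [inner_smul_right, inner_sum, ← Finset.mul_sum, empiricalVariance]
    calc _ ≤ (N : ℝ)⁻¹ * ((N : ℝ)⁻¹ * (a * N * ∑ j, ‖x j - empiricalMean x‖ ^ 2)) := by gcongr
      _ = _ := by field_simp
  have hcontrol : ∑ j, ⟪x j - empiricalMean x, κ • z j + c • ∑ k, z k⟫
      = κ * b * ∑ j, ⟪x j - empiricalMean x, x₀ j - empiricalMean x₀⟫ := by
    simp only [inner_add_right, Finset.sum_add_distrib, sum_inner_sub_empiricalMean_const hN,
      inner_smul_right, ← Finset.mul_sum]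
    rw [← sum_inner_sub_empiricalMean_sub_empiricalMean hN x z]
    simp only [hz, inner_smul_right, ← Finset.mul_sum]
    ring
  have hCS := (neg_le_abs _).trans (abs_inv_mul_sum_inner_le x x₀)
  have hcoef : 0 ≤ 1 / ν * (κ * b) := by positivity
  calc _ = (N : ℝ)⁻¹ * ∑ j, ⟪x j - empiricalMean x, (N : ℝ)⁻¹ • ∑ k, Q j k • (x k - x j)⟫
        + 1 / ν * (κ * b)
          * -((N : ℝ)⁻¹ * ∑ j, ⟪x j - empiricalMean x, x₀ j - empiricalMean x₀⟫) := by
        simp only [inner_add_right, inner_smul_right, Finset.sum_add_distrib,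
          ← Finset.mul_sum] at hcontrol ⊢
        linear_combination (-((N : ℝ)⁻¹ * (1 / ν))) * hcontrol
    _ ≤ _ := by gcongr

theorem sub_empiricalMean_eq_exp_smul_of_consensus (hN : N ≠ 0) {ν p T : ℝ} {κ c : ℝ → ℝ}
    (hκ : ContinuousOn κ (Icc 0 T)) {w : Fin N → ℝ → E}
    (hw : ∀ t ∈ Icc 0 T, ∀ i, HasDerivAt (w i)
      ((N : ℝ)⁻¹ • ∑ j, p • (w j t - w i t) + (-(1 / ν)) • (κ t • w i t + c t • ∑ j, w j t)) t) :
    ∀ t ∈ Icc 0 T, ∀ i, w i t - empiricalMean (fun j => w j t)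
      = Real.exp (-p * t - 1 / ν * ∫ s in (0)..t, κ s)
        • (w i 0 - empiricalMean fun j => w j 0) := by
  have hpair : ∀ i j, ∀ t ∈ Icc 0 T, w i t - w j t
      = Real.exp (-p * t - 1 / ν * ∫ s in (0)..t, κ s) • (w i 0 - w j 0) := by
    intro i j
    have hC' : ∀ x ∈ Ico 0 T, HasDerivWithinAt (fun r => p * r + 1 / ν * ∫ s in (0)..r, κ s)
        (p + 1 / ν * κ x) (Ici x) x := fun x hx =>
      (((hasDerivAt_id x).const_mul p).hasDerivWithinAt.congr_deriv (mul_one p)).add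
        ((hκ.hasDerivWithinAt_intervalIntegral_Ici hx).const_mul _)
    have hy' : ∀ x ∈ Ico 0 T, HasDerivWithinAt (fun r => w i r - w j r)
        (-(p + 1 / ν * κ x) • (w i x - w j x)) (Ici x) x := fun x hx => by
      have h := (hw x (Ico_subset_Icc_self hx) i).sub (hw x (Ico_subset_Icc_self hx) j)
      rw [inv_smul_sum_smul_sub hN, inv_smul_sum_smul_sub hN] at h
      exact (h.congr_deriv (by module)).hasDerivWithinAt
    have h := eq_exp_sub_smul_of_hasDerivWithinAt (y := fun r => w i r - w j r)
      (C := fun r => p * r + 1 / ν * ∫ s in (0)..r, κ s)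
      ((continuous_const.mul continuous_id).continuousOn.add
        (continuousOn_const.mul hκ.continuousOn_intervalIntegral)) hC'
      (fun s hs => ((hw s hs i).continuousAt.sub (hw s hs j).continuousAt).continuousWithinAt) hy'
    intro t ht
    rw [h t ht]
    congr 2
    simp only [intervalIntegral.integral_same]
    ring
  intro t ht i
  calc w i t - empiricalMean (fun j => w j t) = (N : ℝ)⁻¹ • ∑ j, (w i t - w j t) :=
        sub_empiricalMean_eq_smul_sum hN (fun j => w j t) i
    _ = Real.exp (-p * t - 1 / ν * ∫ s in (0)..t, κ s) • ((N : ℝ)⁻¹ • ∑ j, (w i 0 - w j 0)) := by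
        rw [Finset.sum_congr rfl fun j _ => hpair i j t ht, ← Finset.smul_sum, smul_comm]
    _ = _ := by rw [← sub_empiricalMean_eq_smul_sum hN (fun j => w j 0) i]

end EmpiricalMoments

theorem open_loop_variance_upper_bound_general (N d : ℕ) (hN : 1 ≤ N)
    (T ν p a : ℝ) (hν : 0 < ν)
    (P : EuclideanSpace ℝ (Fin d) → EuclideanSpace ℝ (Fin d) → ℝ)
    (hPsymm : ∀ v w, P v w = P w v)
    (hPlow : ∀ v w, -a ≤ P v w)
    (kd ko : ℝ → ℝ)
    (hkd : ∀ t ∈ Icc (0:ℝ) T, HasDerivAt kd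
        (-(-2 * p * (((N : ℝ) - 1) / N) * (kd t - ko t / N)
            - (1 / ν) * ((kd t) ^ 2 + ((((N : ℝ) - 1) / N) / N) * (ko t) ^ 2) + 1)) t)
    (hko : ∀ t ∈ Icc (0:ℝ) T, HasDerivAt ko
        (-(2 * p * (kd t - ko t / N)
            - (1 / ν) * (2 * kd t * ko t + (((N : ℝ) - 1) / N) * (ko t) ^ 2
                - (ko t) ^ 2 / N))) t)
    (κ : ℝ → ℝ) (hκ : ∀ t, κ t = kd t - ko t / N)
    (hκ0 : ∀ t ∈ Icc (0:ℝ) T, 0 ≤ κ t)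
    (βN : ℝ → ℝ)
    (hβN : ∀ t, βN t = Real.exp (-p * t - (1 / ν) * ∫ s in (0:ℝ)..t, κ s))
    (v w : Fin N → ℝ → EuclideanSpace ℝ (Fin d))
    (hv : ∀ t ∈ Icc (0:ℝ) T, ∀ i : Fin N,
        HasDerivAt (v i)
          ((N : ℝ)⁻¹ • ∑ j, P (v i t) (v j t) • (v j t - v i t)
            + (-(1 / ν)) • ((kd t - ko t / N) • w i t + (ko t / N) • ∑ j, w j t)) t)
    (hw : ∀ t ∈ Icc (0:ℝ) T, ∀ i : Fin N,
        HasDerivAt (w i)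
          ((N : ℝ)⁻¹ • ∑ j, p • (w j t - w i t)
            + (-(1 / ν)) • ((kd t - ko t / N) • w i t + (ko t / N) • ∑ j, w j t)) t)
    (hinit : ∀ i, w i 0 = v i 0)
    (mv : ℝ → EuclideanSpace ℝ (Fin d))
    (hmv : ∀ t, mv t = (N : ℝ)⁻¹ • ∑ j, v j t)
    (σ2v : ℝ → ℝ) (hσ2v : ∀ t, σ2v t = (N : ℝ)⁻¹ * ∑ j, ‖v j t - mv t‖ ^ 2)
    (hσ2vpos : ∀ t ∈ Icc (0:ℝ) T, 0 < σ2v t) :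
    ∀ t ∈ Icc (0:ℝ) T,
      σ2v t ≤ σ2v 0 * Real.exp (2 * a * t)
        * (1 + (1 / ν) * ∫ s in (0:ℝ)..t, Real.exp (-a * s) * κ s * βN s) ^ 2 := by
  have hN0 : N ≠ 0 := by omega
  have hκc : ContinuousOn κ (Icc 0 T) := by
    rw [funext hκ]
    exact fun s hs => ((hkd s hs).continuousAt.sub
      ((hko s hs).continuousAt.div_const _)).continuousWithinAt
  simp only [← hκ] at hv hw
  have hβc : ContinuousOn βN (Icc 0 T) := by
    rw [funext hβN]
    exact ((continuous_const.mul continuous_id).continuousOn.sub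
      (continuousOn_const.mul hκc.continuousOn_intervalIntegral)).rexp
  have hwdev : ∀ s ∈ Icc 0 T, ∀ j, w j s - empiricalMean (fun k => w k s)
      = βN s • (v j 0 - empiricalMean fun k => v k 0) := fun s hs j => by
    rw [hβN, sub_empiricalMean_eq_exp_smul_of_consensus hN0 hκc hw s hs j]
    simp only [hinit]
  obtain rfl : σ2v = fun t => empiricalVariance fun j => v j t := by
    funext t
    simp only [hσ2v, hmv, empiricalVariance, empiricalMean]
  have hbound := le_mul_exp_mul_sq_of_hasDerivAt_le (a := a) (c := 1 / ν)
    (g := fun s => κ s * βN s)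
    (fun s hs => (hasDerivAt_empiricalVariance hN0 (hv s hs)).continuousAt.continuousWithinAt)
    hσ2vpos (fun s hs => hasDerivAt_empiricalVariance hN0 (hv s (Ioo_subset_Icc_self hs)))
    (fun s hs => by
      have hs' := Ioo_subset_Icc_self hs
      have := inv_mul_sum_inner_drift_le hN0 hν (hκ0 s hs') (by rw [hβN]; positivity)
        (Q := fun j k => P (v j s) (v k s)) (fun j k => hPsymm _ _) (fun j k => hPlow _ _)
        (x := fun j => v j s) (c := ko s / N) (hwdev s hs')
      linarith)
    (hκc.mul hβc).integrableOn_Icc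
  simpa only [mul_assoc] using hbound

/-- Upper variance bound for the open-loop coupled system with
kernel bounded below by `−a`: with `κ = k_d − k_o/N ≥ 0` and
`β_N(t) = exp(−p̄t − (1/ν)∫₀ᵗ κ)`, the empirical variance of the nonlinear state
satisfies `σ_v²(t) ≤ σ_v²(0) e^{2at}(1 + (1/ν)∫₀ᵗ e^{−as} κ(s) β_N(s) ds)²`. -/
theorem open_loop_variance_upper_bound (N d : ℕ) (hN : 1 ≤ N) (hd : 1 ≤ d)
    (T ν p a : ℝ) (hT : 0 < T) (hν : 0 < ν) (ha : 0 ≤ a)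
    (P : EuclideanSpace ℝ (Fin d) → EuclideanSpace ℝ (Fin d) → ℝ)
    (hPcont : Continuous fun q : EuclideanSpace ℝ (Fin d) × EuclideanSpace ℝ (Fin d) =>
      P q.1 q.2)
    (hPsymm : ∀ v w, P v w = P w v)
    (hPlow : ∀ v w, -a ≤ P v w)
    (kd ko : ℝ → ℝ)
    (hkd : ∀ t ∈ Icc (0:ℝ) T, HasDerivAt kd
        (-(-2 * p * (((N : ℝ) - 1) / N) * (kd t - ko t / N)
            - (1 / ν) * ((kd t) ^ 2 + ((((N : ℝ) - 1) / N) / N) * (ko t) ^ 2) + 1)) t)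
    (hkdT : kd T = 0)
    (hko : ∀ t ∈ Icc (0:ℝ) T, HasDerivAt ko
        (-(2 * p * (kd t - ko t / N)
            - (1 / ν) * (2 * kd t * ko t + (((N : ℝ) - 1) / N) * (ko t) ^ 2
                - (ko t) ^ 2 / N))) t)
    (hkoT : ko T = 0)
    (κ : ℝ → ℝ) (hκ : ∀ t, κ t = kd t - ko t / N)
    (hκ0 : ∀ t ∈ Icc (0:ℝ) T, 0 ≤ κ t)
    (βN : ℝ → ℝ)
    (hβN : ∀ t, βN t = Real.exp (-p * t - (1 / ν) * ∫ s in (0:ℝ)..t, κ s))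
    (v w : Fin N → ℝ → EuclideanSpace ℝ (Fin d))
    (hv : ∀ t ∈ Icc (0:ℝ) T, ∀ i : Fin N,
        HasDerivAt (v i)
          ((N : ℝ)⁻¹ • ∑ j, P (v i t) (v j t) • (v j t - v i t)
            + (-(1 / ν)) • ((kd t - ko t / N) • w i t + (ko t / N) • ∑ j, w j t)) t)
    (hw : ∀ t ∈ Icc (0:ℝ) T, ∀ i : Fin N,
        HasDerivAt (w i)
          ((N : ℝ)⁻¹ • ∑ j, p • (w j t - w i t)
            + (-(1 / ν)) • ((kd t - ko t / N) • w i t + (ko t / N) • ∑ j, w j t)) t)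
    (hinit : ∀ i, w i 0 = v i 0)
    (mv : ℝ → EuclideanSpace ℝ (Fin d))
    (hmv : ∀ t, mv t = (N : ℝ)⁻¹ • ∑ j, v j t)
    (σ2v : ℝ → ℝ) (hσ2v : ∀ t, σ2v t = (N : ℝ)⁻¹ * ∑ j, ‖v j t - mv t‖ ^ 2)
    (hσ2vpos : ∀ t ∈ Icc (0:ℝ) T, 0 < σ2v t) :
    ∀ t ∈ Icc (0:ℝ) T,
      σ2v t ≤ σ2v 0 * Real.exp (2 * a * t)
        * (1 + (1 / ν) * ∫ s in (0:ℝ)..t, Real.exp (-a * s) * κ s * βN s) ^ 2 :=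
  open_loop_variance_upper_bound_general N d hN T ν p a hν P hPsymm hPlow kd ko hkd hko κ hκ hκ0 βN
    hβN v w hv hw hinit mv hmv σ2v hσ2v hσ2vpos
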